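/- Let a, b ∈ ℝ with b ≠ 0, and let p : ℝ → ℝ be continuous on [0,1]. Suppose w : ℝ → ℝ is four times continuously differentiable on [0,1], with ∫₀¹ w(x)² dx > 0, satisfies the simply supported boundary conditions w(0) = w(1) = 0 and w''(0) = w''(1) = 0, and for all x ∈ [0,1] both a·w⁗(x) − b·(2·κ(w)·w''(x) − κ(w)²·w(x)) = p(x) and (a − b)·w⁗(x) = p(x) hold, where κ(w) = (∫₀¹ w·w'')/(∫₀¹ w²). Then there exist a positive integer n and a nonzero constant c such that w(x) = c·sin(n·π·x) for all x ∈ [0,1]. -/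

import Mathlib

/-! Subtracting the two strip equations and dividing by `b` gives `(d² - κ)² w = 0`, `κ = κ(w)`.
With `u = w'' - κ w` one has `u'' = κ u`, so the Wronskian `w' u - w u'` has derivative `u²`; it
vanishes at both ends because `w` and `u` do, hence `u = 0`, i.e. `w'' = κ w`. Integration by
parts gives `κ ∫ w² = -∫ w'² < 0`, so `κ = -ω²` with `ω > 0`; conservation of `w'² + ω² w²` then
forces `w = c sin (ω x)` with `c ≠ 0`, and `w 1 = 0` gives `ω = n π`. -/

open Real Set MeasureTheory intervalIntegral

/-- `D n w` is the `n`-th derivative of `w` on the interval `[0,1]`. -/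
noncomputable def D (n : ℕ) (w : ℝ → ℝ) : ℝ → ℝ :=
  iteratedDerivWithin n w (Set.Icc (0 : ℝ) 1)

/-- The Rayleigh-type quotient `κ(w) = (∫₀¹ w w'') / (∫₀¹ w²)`. -/
noncomputable def kappa (w : ℝ → ℝ) : ℝ :=
  (∫ x in (0:ℝ)..1, w x * D 2 w x) / (∫ x in (0:ℝ)..1, (w x) ^ 2)

section Interval

variable {a b : ℝ}

theorem eqOn_zero_of_integral_sq_eq_zero (hab : a < b) {f : ℝ → ℝ}
    (hf : ContinuousOn f (Icc a b)) (h : ∫ x in a..b, f x ^ 2 = 0) : EqOn f 0 (Icc a b) := by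
  have hae := (integral_eq_zero_iff_of_le_of_nonneg_ae hab.le (.of_forall fun x => sq_nonneg (f x))
    ((hf.pow 2).intervalIntegrable_of_Icc hab.le)).mp h
  rw [Measure.restrict_congr_set Ioc_ae_eq_Icc] at hae
  intro x hx
  simpa using Measure.eqOn_Icc_of_ae_eq volume hab.ne hae (hf.pow 2) continuousOn_const hx

theorem integral_sq_eq_zero_of_eqOn_zero {f : ℝ → ℝ} (h : EqOn f 0 (uIcc a b)) :
    ∫ x in a..b, f x ^ 2 = 0 := by
  rw [integral_congr (g := fun _ => 0) fun x hx => by simp [show f x = 0 from h hx]]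
  simp

theorem integral_eq_sub_of_hasDerivWithinAt_Icc (hab : a ≤ b) {f f' : ℝ → ℝ}
    (hf : ∀ x ∈ Icc a b, HasDerivWithinAt f (f' x) (Icc a b) x) (hf' : ContinuousOn f' (Icc a b)) :
    ∫ x in a..b, f' x = f b - f a :=
  integral_eq_sub_of_hasDerivAt_of_le hab (fun x hx => (hf x hx).continuousWithinAt)
    (fun x hx => (hf x (Ioo_subset_Icc_self hx)).hasDerivAt (Icc_mem_nhds hx.1 hx.2))
    (hf'.intervalIntegrable_of_Icc hab)

theorem constant_of_hasDerivWithinAt_zero {f : ℝ → ℝ}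
    (hf : ∀ x ∈ Icc a b, HasDerivWithinAt f 0 (Icc a b) x) : ∀ x ∈ Icc a b, f x = f a :=
  constant_of_has_deriv_right_zero (fun x hx => (hf x hx).continuousWithinAt) fun x hx =>
    (hf x (Ico_subset_Icc_self hx)).mono_of_mem_nhdsWithin (Icc_mem_nhdsGE_of_mem hx)

theorem eqOn_zero_of_hasDerivWithinAt_neg_mul {μ : ℝ} (hμ : 0 ≤ μ) {z z' : ℝ → ℝ}
    (hz : ∀ x ∈ Icc a b, HasDerivWithinAt z (z' x) (Icc a b) x)
    (hz' : ∀ x ∈ Icc a b, HasDerivWithinAt z' (-μ * z x) (Icc a b) x)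
    (ha : z a = 0) (ha' : z' a = 0) : EqOn z 0 (Icc a b) := by
  have henergy : ∀ x ∈ Icc a b, z' x ^ 2 + μ * z x ^ 2 = 0 := by
    intro x hx
    refine (constant_of_hasDerivWithinAt_zero (f := fun y => z' y ^ 2 + μ * z y ^ 2)
      (fun y hy => ?_) x hx).trans (by simp [ha, ha'])
    exact (((hz' y hy).pow 2).add (((hz y hy).pow 2).const_mul μ)).congr_deriv (by ring)
  have hz'_zero : ∀ x ∈ Icc a b, z' x = 0 := fun x hx => by
    nlinarith [henergy x hx, sq_nonneg (z' x), mul_nonneg hμ (sq_nonneg (z x))]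
  intro x hx
  rw [constant_of_hasDerivWithinAt_zero (f := z) (fun y hy => hz'_zero y hy ▸ hz y hy) x hx, ha,
    Pi.zero_apply]

theorem eqOn_mul_sin_of_hasDerivWithinAt {ω : ℝ} (hω : ω ≠ 0) {z z' : ℝ → ℝ}
    (hz : ∀ x ∈ Icc 0 b, HasDerivWithinAt z (z' x) (Icc 0 b) x)
    (hz' : ∀ x ∈ Icc 0 b, HasDerivWithinAt z' (-ω ^ 2 * z x) (Icc 0 b) x) (h0 : z 0 = 0) :
    EqOn z (fun x => z' 0 / ω * sin (ω * x)) (Icc 0 b) := by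
  set c := z' 0 / ω
  have hs : ∀ x, HasDerivAt (fun y => c * sin (ω * y)) (c * ω * cos (ω * x)) x := fun x =>
    (((hasDerivAt_id' x).const_mul ω).sin.const_mul c).congr_deriv (by ring)
  have hs' : ∀ x, HasDerivAt (fun y => c * ω * cos (ω * y)) (-ω ^ 2 * (c * sin (ω * x))) x :=
    fun x => (((hasDerivAt_id' x).const_mul ω).cos.const_mul (c * ω)).congr_deriv (by ring)
  have hdiff := eqOn_zero_of_hasDerivWithinAt_neg_mul (sq_nonneg ω)
    (z := fun x => z x - c * sin (ω * x)) (z' := fun x => z' x - c * ω * cos (ω * x))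
    (fun x hx => (hz x hx).sub (hs x).hasDerivWithinAt)
    (fun x hx => ((hz' x hx).sub (hs' x).hasDerivWithinAt).congr_deriv (by ring))
    (by simp [h0]) (by simp [c, hω])
  intro x hx
  simpa [sub_eq_zero] using hdiff hx

end Interval

theorem exists_nat_pos_mul_pi_eq_of_sin_eq_zero {ω : ℝ} (hω : 0 < ω) (h : sin ω = 0) :
    ∃ n : ℕ, 0 < n ∧ (n : ℝ) * π = ω := by
  obtain ⟨n, rfl⟩ := sin_eq_zero_iff.1 h
  have hn : 0 < n := by exact_mod_cast pos_of_mul_pos_left hω pi_pos.le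
  exact ⟨n.toNat, by omega, by rw [← Int.cast_natCast, Int.toNat_of_nonneg hn.le]⟩

section Derivatives

variable {w : ℝ → ℝ} {m n : ℕ}

theorem continuousOn_D (hw : ContDiffOn ℝ m w (Icc 0 1)) (hn : n ≤ m) :
    ContinuousOn (D n w) (Icc 0 1) :=
  hw.continuousOn_iteratedDerivWithin (by exact_mod_cast hn) (uniqueDiffOn_Icc zero_lt_one)

theorem hasDerivWithinAt_D (hw : ContDiffOn ℝ m w (Icc 0 1)) (hn : n < m) {x : ℝ}
    (hx : x ∈ Icc (0 : ℝ) 1) : HasDerivWithinAt (D n w) (D (n + 1) w x) (Icc 0 1) x := by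
  unfold D
  rw [iteratedDerivWithin_succ]
  exact (hw.differentiableOn_iteratedDerivWithin (by exact_mod_cast hn)
    (uniqueDiffOn_Icc zero_lt_one) x hx).hasDerivWithinAt

theorem hasDerivWithinAt_D_one (hw : ContDiffOn ℝ m w (Icc 0 1)) (hm : 1 ≤ m) {x : ℝ}
    (hx : x ∈ Icc (0 : ℝ) 1) : HasDerivWithinAt w (D 1 w x) (Icc 0 1) x := by
  simpa [D] using hasDerivWithinAt_D hw (n := 0) hm hx

theorem integral_mul_D_two (hw : ContDiffOn ℝ 2 w (Icc 0 1)) (h0 : w 0 = 0) (h1 : w 1 = 0) :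
    ∫ x in (0 : ℝ)..1, w x * D 2 w x = -∫ x in (0 : ℝ)..1, D 1 w x ^ 2 := by
  have hint : ∀ n ≤ 2, IntervalIntegrable (D n w) volume 0 1 := fun n hn =>
    (continuousOn_D hw (by exact_mod_cast hn)).intervalIntegrable_of_Icc zero_le_one
  rw [integral_mul_deriv_eq_deriv_mul_of_hasDerivWithinAt (u' := D 1 w) (v := D 1 w)
    (by simpa [uIcc_of_le] using fun x hx => hasDerivWithinAt_D_one hw (by norm_num) hx)
    (by simpa [uIcc_of_le] using fun x hx => hasDerivWithinAt_D hw (n := 1) (by norm_num) hx)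
    (hint 1 (by norm_num)) (hint 2 le_rfl)]
  simp [h0, h1, sq]

theorem kappa_neg (hw : ContDiffOn ℝ 2 w (Icc 0 1)) (hpos : 0 < ∫ x in (0 : ℝ)..1, w x ^ 2)
    (h0 : w 0 = 0) (h1 : w 1 = 0) : kappa w < 0 := by
  rw [kappa, integral_mul_D_two hw h0 h1]
  refine div_neg_of_neg_of_pos (neg_neg_of_pos ?_) hpos
  refine (integral_nonneg zero_le_one fun x _ => sq_nonneg _).lt_of_ne fun h => hpos.ne' ?_
  have hD1 := eqOn_zero_of_integral_sq_eq_zero zero_lt_one (continuousOn_D hw (by norm_num)) h.symm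
  refine integral_sq_eq_zero_of_eqOn_zero fun x hx => ?_
  rw [uIcc_of_le zero_le_one] at hx
  rw [constant_of_hasDerivWithinAt_zero (f := w)
    (fun y hy => (hasDerivWithinAt_D_one hw (by norm_num) hy).congr_deriv (hD1 hy)) x hx, h0,
    Pi.zero_apply]

theorem D_two_eq_of_D_four_eq (hw : ContDiffOn ℝ 4 w (Icc 0 1)) {κ : ℝ}
    (h0 : w 0 = 0) (h1 : w 1 = 0) (h0'' : D 2 w 0 = 0) (h1'' : D 2 w 1 = 0)
    (hode : ∀ x ∈ Icc (0 : ℝ) 1, D 4 w x = 2 * κ * D 2 w x - κ ^ 2 * w x) :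
    ∀ x ∈ Icc (0 : ℝ) 1, D 2 w x = κ * w x := by
  set u := fun x => D 2 w x - κ * w x
  set u' := fun x => D 3 w x - κ * D 1 w x
  have hu : ∀ x ∈ Icc (0 : ℝ) 1, HasDerivWithinAt u (u' x) (Icc 0 1) x := fun x hx =>
    (hasDerivWithinAt_D hw (by norm_num) hx).sub
      ((hasDerivWithinAt_D_one hw (by norm_num) hx).const_mul κ)
  have hu' : ∀ x ∈ Icc (0 : ℝ) 1, HasDerivWithinAt u' (κ * u x) (Icc 0 1) x := fun x hx =>
    ((hasDerivWithinAt_D hw (by norm_num) hx).sub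
      ((hasDerivWithinAt_D hw (by norm_num) hx).const_mul κ)).congr_deriv
      (by rw [hode x hx]; ring)
  have hwronskian : ∀ x ∈ Icc (0 : ℝ) 1,
      HasDerivWithinAt (fun x => D 1 w x * u x - w x * u' x) (u x ^ 2) (Icc 0 1) x :=
    fun x hx => (((hasDerivWithinAt_D hw (by norm_num) hx).mul (hu x hx)).sub
      ((hasDerivWithinAt_D_one hw (by norm_num) hx).mul (hu' x hx))).congr_deriv (by ring)
  have hucont : ContinuousOn u (Icc 0 1) := fun x hx => (hu x hx).continuousWithinAt
  have hint : ∫ x in (0 : ℝ)..1, u x ^ 2 = 0 := by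
    rw [integral_eq_sub_of_hasDerivWithinAt_Icc zero_le_one hwronskian (hucont.pow 2)]
    simp [u, h0, h1, h0'', h1'']
  intro x hx
  simpa [u, sub_eq_zero] using eqOn_zero_of_integral_sq_eq_zero zero_lt_one hucont hint hx

end Derivatives

theorem simply_supported_laminated_solution_is_sinusoidal_general
    (a b : ℝ) (hb : b ≠ 0)
    (p : ℝ → ℝ)
    (w : ℝ → ℝ) (hw : ContDiffOn ℝ 4 w (Set.Icc (0 : ℝ) 1))
    (hpos : 0 < ∫ x in (0:ℝ)..1, (w x) ^ 2)
    (h0 : w 0 = 0) (h1 : w 1 = 0) (h0'' : D 2 w 0 = 0) (h1'' : D 2 w 1 = 0)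
    (hPGD : ∀ x ∈ Set.Icc (0 : ℝ) 1,
      a * D 4 w x - b * (2 * kappa w * D 2 w x - (kappa w) ^ 2 * w x) = p x)
    (hCLPT : ∀ x ∈ Set.Icc (0 : ℝ) 1, (a - b) * D 4 w x = p x) :
    ∃ n : ℕ, 0 < n ∧ ∃ c : ℝ, c ≠ 0 ∧
      ∀ x ∈ Set.Icc (0 : ℝ) 1, w x = c * Real.sin ((n : ℝ) * π * x) := by
  have hode : ∀ x ∈ Icc (0 : ℝ) 1, D 4 w x = 2 * kappa w * D 2 w x - kappa w ^ 2 * w x :=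
    fun x hx => sub_eq_zero.1 <|
      (mul_eq_zero.1 (by linear_combination hPGD x hx - hCLPT x hx)).resolve_left hb
  have hD2 := D_two_eq_of_D_four_eq hw h0 h1 h0'' h1'' hode
  have hκ : kappa w < 0 := kappa_neg (hw.of_le (by norm_num)) hpos h0 h1
  set ω := √(-kappa w)
  have hω : 0 < ω := sqrt_pos.2 (neg_pos.2 hκ)
  have hω2 : ω ^ 2 = -kappa w := sq_sqrt (neg_pos.2 hκ).le
  have hsin := eqOn_mul_sin_of_hasDerivWithinAt hω.ne'
    (fun x hx => hasDerivWithinAt_D_one hw (by norm_num) hx)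
    (fun x hx => (hasDerivWithinAt_D hw (n := 1) (by norm_num) hx).congr_deriv
      (by rw [hD2 x hx, hω2]; ring)) h0
  set c := D 1 w 0 / ω
  have hc : c ≠ 0 := fun hc => hpos.ne' <| integral_sq_eq_zero_of_eqOn_zero fun x hx => by
    rw [uIcc_of_le zero_le_one] at hx
    simp [hsin hx, hc]
  obtain ⟨n, hn, hnω⟩ := exists_nat_pos_mul_pi_eq_of_sin_eq_zero hω <| by
    simpa [hc, h1] using (hsin (right_mem_Icc.2 zero_le_one)).symm
  exact ⟨n, hn, c, hc, fun x hx => by rw [hsin hx, hnω]⟩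

/-- Laminated-strip classification: for a Poisson-coupling coefficient `b ≠ 0`,
a simply supported strip deflection solving simultaneously the PGD limit strip
equation `a w⁗ − b (2κ(w) w'' − κ(w)² w) = p` and the Classical Laminated Plate Theory
strip equation `(a − b) w⁗ = p` must be a pure sinusoidal deflection `w(x) = c sin(nπx)`. -/
theorem simply_supported_laminated_solution_is_sinusoidal
    (a b : ℝ) (hb : b ≠ 0)
    (p : ℝ → ℝ) (hp : ContinuousOn p (Set.Icc (0 : ℝ) 1))
    (w : ℝ → ℝ) (hw : ContDiffOn ℝ 4 w (Set.Icc (0 : ℝ) 1))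
    (hpos : 0 < ∫ x in (0:ℝ)..1, (w x) ^ 2)
    (h0 : w 0 = 0) (h1 : w 1 = 0) (h0'' : D 2 w 0 = 0) (h1'' : D 2 w 1 = 0)
    (hPGD : ∀ x ∈ Set.Icc (0 : ℝ) 1,
      a * D 4 w x - b * (2 * kappa w * D 2 w x - (kappa w) ^ 2 * w x) = p x)
    (hCLPT : ∀ x ∈ Set.Icc (0 : ℝ) 1, (a - b) * D 4 w x = p x) :
    ∃ n : ℕ, 0 < n ∧ ∃ c : ℝ, c ≠ 0 ∧
      ∀ x ∈ Set.Icc (0 : ℝ) 1, w x = c * Real.sin ((n : ℝ) * π * x) :=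
  simply_supported_laminated_solution_is_sinusoidal_general a b hb p w hw hpos h0 h1 h0'' h1'' hPGD
    hCLPT
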